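/- arXiv:1709.10492 — 3 statements merged into one kernel-verified Lean document; each statement's English description precedes it below -/
import Mathlib

section
/- Let n ≥ 1 and let 𝒢 denote the set of real (2n)×(2n) matrices A satisfying Aᵀ = A, A·A = A and trace A = n, equipped with the subspace topology from the space of matrices; 𝒢 parametrizes the Grassmann manifold G_n(ℝ^{2n}) of n-dimensional subspaces of ℝ^{2n} via orthogonal projection matrices, and the involution V ↦ V^⊥ corresponds to A ↦ 1 − A. Then: (i) for every A ∈ 𝒢, also 1 − A ∈ 𝒢; and (ii) there exists a continuous map h : 𝒢 → S^{2n−1} to the unit sphere of ℝ^{2n} such that h(1 − A) = −h(A) for all A ∈ 𝒢. -/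
open Matrix

/-- The set of symmetric idempotent `2n×2n` matrices of trace `n` parametrizing the
Grassmann manifold `G_n(ℝ^{2n})`. -/
def GrassMat (n : ℕ) : Set (Matrix (Fin (2 * n)) (Fin (2 * n)) ℝ) :=
  {A | Aᵀ = A ∧ A * A = A ∧ A.trace = (n : ℝ)}

/-!
For an orthogonal projection `A`, the reflection `2A - 1` through its range is a symmetric
involution, hence an orthogonal matrix, so each of its columns is a unit vector. Replacing `A`
by `1 - A` negates the reflection, so a fixed column of `2A - 1` is the required map.
-/

lemma IsIdempotentElem.two_mul_sub_one_mul_self {R : Type*} [Ring R] {p : R}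
    (hp : IsIdempotentElem p) : (2 * p - 1) * (2 * p - 1) = 1 := by
  have h : (2 * p - 1) * (2 * p - 1) = 2 * (p * p - p) + 2 * (p * p - p) + 1 := by noncomm_ring
  rw [h, hp.eq, sub_self]
  simp

namespace Matrix

variable {ι : Type*} [Fintype ι] [DecidableEq ι]

lemma two_mul_sub_one_mem_orthogonalGroup {A : Matrix ι ι ℝ} (hsym : Aᵀ = A)
    (hidem : IsIdempotentElem A) : 2 * A - 1 ∈ orthogonalGroup ι ℝ := by
  have hsym' : (2 * A - 1)ᵀ = 2 * A - 1 := by simp [hsym, (Commute.ofNat_left 2 A).eq]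
  rw [mem_orthogonalGroup_iff', hsym']
  exact hidem.two_mul_sub_one_mul_self

lemma norm_toLp_transpose_eq_one_of_mem_orthogonalGroup {Q : Matrix ι ι ℝ}
    (hQ : Q ∈ orthogonalGroup ι ℝ) (j : ι) : ‖WithLp.toLp 2 (Qᵀ j)‖ = 1 := by
  have hcol : ∑ i, Q i j ^ 2 = 1 := by
    simpa [mul_apply, sq] using congrFun (congrFun ((mem_orthogonalGroup_iff' ι ℝ).1 hQ) j) j
  simp [EuclideanSpace.norm_eq, hcol]

def reflectionCol (j : ι) (A : Matrix ι ι ℝ) : EuclideanSpace ℝ ι :=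
  WithLp.toLp 2 ((2 * A - 1)ᵀ j)

lemma continuous_reflectionCol (j : ι) : Continuous (reflectionCol j) := by
  unfold reflectionCol
  fun_prop

lemma reflectionCol_one_sub (j : ι) (A : Matrix ι ι ℝ) :
    reflectionCol j (1 - A) = -reflectionCol j A := by
  have h : 2 * (1 - A) - 1 = -(2 * A - 1) := by noncomm_ring
  rw [reflectionCol, h]
  rfl

lemma norm_reflectionCol {A : Matrix ι ι ℝ} (hsym : Aᵀ = A) (hidem : IsIdempotentElem A)
    (j : ι) : ‖reflectionCol j A‖ = 1 :=
  norm_toLp_transpose_eq_one_of_mem_orthogonalGroup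
    (two_mul_sub_one_mem_orthogonalGroup hsym hidem) j

end Matrix

lemma one_sub_mem_grassMat {n : ℕ} {A : Matrix (Fin (2 * n)) (Fin (2 * n)) ℝ}
    (hA : A ∈ GrassMat n) : 1 - A ∈ GrassMat n := by
  obtain ⟨hsym, hidem, htr⟩ := hA
  refine ⟨by simp [hsym], IsIdempotentElem.one_sub hidem, ?_⟩
  rw [trace_sub, trace_one, htr, Fintype.card_fin]
  push_cast
  ring

/-- (i) The set of projection matrices parametrizing `G_n(ℝ^{2n})` is closed under the
orthogonal-complement involution `A ↦ 1 − A`, and (ii) there is a continuous map `h` from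
it to the sphere `S^{2n−1}` that is equivariant: `h(1 − A) = −h(A)`. -/
theorem grassmann_to_sphere (n : ℕ) (hn : 1 ≤ n) :
    (∀ A ∈ GrassMat n, (1 - A) ∈ GrassMat n) ∧
    ∃ h : (GrassMat n) → Metric.sphere (0 : EuclideanSpace ℝ (Fin (2 * n))) 1,
      Continuous h ∧
      ∀ (A : Matrix (Fin (2 * n)) (Fin (2 * n)) ℝ) (hA : A ∈ GrassMat n)
        (hA' : (1 - A) ∈ GrassMat n), h ⟨1 - A, hA'⟩ = -h ⟨A, hA⟩ := by
  refine ⟨fun A hA => one_sub_mem_grassMat hA, ?_⟩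
  let j : Fin (2 * n) := ⟨0, by omega⟩
  have hmem (A : GrassMat n) : reflectionCol j A.1 ∈ Metric.sphere 0 1 :=
    mem_sphere_zero_iff_norm.2 (norm_reflectionCol A.2.1 A.2.2.1 j)
  exact ⟨fun A => ⟨reflectionCol j A, hmem A⟩,
    ((continuous_reflectionCol j).comp continuous_subtype_val).subtype_mk hmem,
    fun A _ _ => Subtype.ext (reflectionCol_one_sub j A)⟩
end

section
/- Let m ≥ 1, let P be a real m×m matrix with Pᵀ = P, P·P = P and trace P = n where n ≤ m, and let X be a finite set of vectors in ℝ^m. Let I_P = Σ_{x ∈ X} (P·x)(P·x)ᵀ be the sum of the outer products of the projected vectors with themselves. Then X^{m−n} divides the characteristic polynomial of I_P; that is, the characteristic polynomial of I_P has at least m − n zero roots. -/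
/-!
An idempotent matrix of trace `n` has rank `n`, and `I_P = P · (Σ x (P x)ᵀ)` factors through
it, so `I_P` has rank at most `n` and kernel of dimension at least `m - n`. The algebraic
multiplicity of the eigenvalue `0` dominates its geometric multiplicity, whence `X ^ (m - n)`
divides the characteristic polynomial.
-/

open Matrix Polynomial

namespace Matrix

theorem rank_sum_vecMulVec_mulVec_le {R ι α : Type*} [CommRing R] [StrongRankCondition R]
    [Fintype ι] (P : Matrix ι ι R) (s : Finset α) (v w : α → ι → R) :
    (∑ a ∈ s, vecMulVec (P *ᵥ v a) (w a)).rank ≤ P.rank := by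
  simp_rw [← mul_vecMulVec, ← Finset.mul_sum]
  exact rank_mul_le_left _ _

section Field

variable {K ι : Type*} [Field K] [Fintype ι] [DecidableEq ι]

theorem rank_eq_trace_of_isIdempotentElem [CharZero K] {P : Matrix ι ι K}
    (hP : IsIdempotentElem P) : (P.rank : K) = P.trace := by
  have hproj := LinearMap.IsIdempotentElem.isProj_range (toLin' P) (hP.map toLinAlgEquiv')
  rw [rank, ← trace_toLin'_eq, hproj.trace]
  rfl

theorem X_pow_card_sub_rank_dvd_charpoly (A : Matrix ι ι K) :
    (X : K[X]) ^ (Fintype.card ι - A.rank) ∣ A.charpoly := by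
  have hker : Fintype.card ι - A.rank = Module.finrank K (LinearMap.ker A.mulVecLin) := by
    have := A.mulVecLin.finrank_range_add_finrank_ker
    rw [Module.finrank_fintype_fun_eq_card] at this
    rw [rank]
    omega
  have hmult := A.mulVecLin.finrank_eigenspace_le 0
  rw [Module.End.eigenspace_zero, charpoly_mulVecLin, ← hker,
    le_rootMultiplicity_iff A.charpoly_monic.ne_zero, map_zero, sub_zero] at hmult
  exact hmult

end Field

end Matrix

theorem charpoly_inertia_dvd_general (m n : ℕ)
    (P : Matrix (Fin m) (Fin m) ℝ) (hidem : P * P = P)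
    (htr : P.trace = (n : ℝ)) (X : Finset (Fin m → ℝ)) :
    (Polynomial.X : Polynomial ℝ) ^ (m - n) ∣
      (∑ x ∈ X, Matrix.vecMulVec (P.mulVec x) (P.mulVec x)).charpoly := by
  have hrankP : P.rank = n := by
    exact_mod_cast (rank_eq_trace_of_isIdempotentElem hidem).trans htr
  have hrank : (∑ x ∈ X, vecMulVec (P *ᵥ x) (P *ᵥ x)).rank ≤ n :=
    hrankP ▸ rank_sum_vecMulVec_mulVec_le P X (fun x => x) (P *ᵥ ·)
  have hdvd := X_pow_card_sub_rank_dvd_charpoly (∑ x ∈ X, vecMulVec (P *ᵥ x) (P *ᵥ x))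
  rw [Fintype.card_fin] at hdvd
  exact (pow_dvd_pow _ (by omega)).trans hdvd

/-- If `P` is a symmetric idempotent `m×m` matrix of trace `n ≤ m` and `X` a finite set of
vectors, then the characteristic polynomial of the inertia matrix
`I_P = Σ_{x ∈ X} (P·x)(P·x)ᵀ` is divisible by `X^{m-n}`, i.e. it has at least `m − n`
zero roots. -/
theorem charpoly_inertia_dvd (m n : ℕ) (hm : 1 ≤ m) (hn : n ≤ m)
    (P : Matrix (Fin m) (Fin m) ℝ) (hsym : Pᵀ = P) (hidem : P * P = P)
    (htr : P.trace = (n : ℝ)) (X : Finset (Fin m → ℝ)) :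
    (Polynomial.X : Polynomial ℝ) ^ (m - n) ∣
      (∑ x ∈ X, Matrix.vecMulVec (P.mulVec x) (P.mulVec x)).charpoly :=
  charpoly_inertia_dvd_general m n P hidem htr X
end

section
/- Let a ≥ 1 and b ≥ 0 be natural numbers, and let r, j be natural numbers with r < j ≤ a. Then the binomial coefficient C(2^{a+1}·b + 2^j, 2^{j+1} − 2^{r+1}) is odd if and only if j = r + 1. -/
/-!
By Lucas's theorem for `p = 2`, `C(n, k)` is odd exactly when every binary digit of `k` is
a digit of `n`. Here `k = 2^{j+1} - 2^{r+1}` has digits `r+1, …, j`, all below `a + 1`, while the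
only digit of `n = 2^{a+1} b + 2^j` below `a + 1` is `j`; so the digits of `k` lie among those of
`n` iff `r + 1 = j`.
-/

namespace Nat

theorem odd_choose_iff_odd_choose_mod_two_and_odd_choose_div_two (n k : ℕ) :
    Odd (n.choose k) ↔ Odd ((n % 2).choose (k % 2)) ∧ Odd ((n / 2).choose (k / 2)) := by
  have : Fact (Nat.Prime 2) := ⟨Nat.prime_two⟩
  rw [odd_iff, Choose.choose_modEq_choose_mod_mul_choose_div_nat, ← odd_iff, odd_mul]

theorem odd_choose_mod_two_iff (n k : ℕ) :
    Odd ((n % 2).choose (k % 2)) ↔ (k.testBit 0 → n.testBit 0) := by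
  rcases mod_two_eq_zero_or_one n with hn | hn <;>
    rcases mod_two_eq_zero_or_one k with hk | hk <;> simp [hn, hk, testBit_zero]

theorem odd_choose_iff_forall_testBit (n k : ℕ) :
    Odd (n.choose k) ↔ ∀ i, k.testBit i → n.testBit i := by
  induction n using Nat.strong_induction_on generalizing k with
  | _ n ih =>
  rcases n.eq_zero_or_pos with rfl | hn
  · rcases k.eq_zero_or_pos with rfl | hk
    · simp
    · obtain ⟨i, hi⟩ := exists_testBit_of_ne_zero hk.ne'
      simpa [choose_eq_zero_of_lt hk] using ⟨i, hi⟩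
  rw [odd_choose_iff_odd_choose_mod_two_and_odd_choose_div_two, odd_choose_mod_two_iff,
    ih _ (div_lt_self hn one_lt_two)]
  simp only [← testBit_add_one]
  constructor
  · rintro ⟨h0, hs⟩ (_ | i)
    exacts [h0, hs i]
  · exact fun h => ⟨h 0, fun i => h (i + 1)⟩

theorem testBit_two_pow_sub_two_pow {m n : ℕ} (hmn : m ≤ n) (i : ℕ) :
    (2 ^ n - 2 ^ m).testBit i = decide (m ≤ i ∧ i < n) := by
  have : 2 ^ n - 2 ^ m = 2 ^ m * (2 ^ (n - m) - 1) := by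
    rw [Nat.mul_sub, ← pow_add, Nat.add_sub_cancel' hmn, mul_one]
  rw [this, testBit_two_pow_mul, testBit_two_pow_sub_one]
  by_cases m ≤ i <;> simp [*]; omega

theorem testBit_two_pow_mul_add_two_pow {m j i : ℕ} (hj : j < m) (hi : i < m) (b : ℕ) :
    (2 ^ m * b + 2 ^ j).testBit i = decide (j = i) := by
  rw [testBit_two_pow_mul_add b (Nat.pow_lt_pow_right one_lt_two hj), if_pos hi, testBit_two_pow]

end Nat

theorem choose_odd_iff_succ_general (a b r j : ℕ) (hrj : r < j) (hja : j ≤ a) :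
    Odd (Nat.choose (2 ^ (a + 1) * b + 2 ^ j) (2 ^ (j + 1) - 2 ^ (r + 1))) ↔ j = r + 1 := by
  have hn : ∀ i ≤ j, (2 ^ (a + 1) * b + 2 ^ j).testBit i = decide (j = i) := fun i hi =>
    Nat.testBit_two_pow_mul_add_two_pow (by omega) (by omega) b
  rw [Nat.odd_choose_iff_forall_testBit]
  simp only [Nat.testBit_two_pow_sub_two_pow (by omega : r + 1 ≤ j + 1), decide_eq_true_eq]
  constructor
  · intro h
    simpa [hn (r + 1) hrj] using h (r + 1) ⟨le_rfl, by omega⟩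
  · rintro rfl i ⟨hi, hi'⟩
    simp only [hn i (by omega), decide_eq_true_eq]
    omega

/-- For `1 ≤ a`, `r < j ≤ a`, the binomial coefficient
`C(2^{a+1}·b + 2^j, 2^{j+1} − 2^{r+1})` is odd if and only if `j = r + 1`. -/
theorem choose_odd_iff_succ (a b r j : ℕ) (ha : 1 ≤ a) (hrj : r < j) (hja : j ≤ a) :
    Odd (Nat.choose (2 ^ (a + 1) * b + 2 ^ j) (2 ^ (j + 1) - 2 ^ (r + 1))) ↔ j = r + 1 :=
  choose_odd_iff_succ_general a b r j hrj hja
end
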